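/- arXiv:1104.3806 — 2 statements merged into one kernel-verified Lean document; each statement's English description precedes it below -/
import Mathlib

section
/- Let u and v be nonzero vectors in a real inner product space with ⟨u, v⟩ ≥ 0, and suppose ‖u - v‖² ≤ α(‖u‖² + ‖v‖²) for some α ∈ [0, 1). Then the normalized vectors satisfy ‖u/‖u‖ − v/‖v‖‖² ≤ 2α. -/
open RealInnerProductSpace

section NormalizedDistance

variable {H : Type*} [NormedAddCommGroup H] [InnerProductSpace ℝ H]

theorem norm_inv_smul_sub_inv_smul_sq {u v : H} (hu : u ≠ 0) (hv : v ≠ 0) :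
    ‖‖u‖⁻¹ • u - ‖v‖⁻¹ • v‖ ^ 2 = 2 - 2 * (⟪u, v⟫ / (‖u‖ * ‖v‖)) := by
  have hu' : ‖u‖ ≠ 0 := norm_ne_zero_iff.mpr hu
  have hv' : ‖v‖ ≠ 0 := norm_ne_zero_iff.mpr hv
  rw [norm_sub_sq_real, norm_smul, norm_smul, norm_inv, norm_inv, norm_norm, norm_norm,
    inv_mul_cancel₀ hu', inv_mul_cancel₀ hv', real_inner_smul_left, real_inner_smul_right]
  field_simp
  ring

/-- `2⟪u, v⟫ ≥ (1 - α)(‖u‖² + ‖v‖²) ≥ 2 (1 - α) ‖u‖ ‖v‖`, the second step by AM-GM. -/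
theorem mul_norm_mul_norm_le_inner_of_norm_sub_sq_le {u v : H} {α : ℝ} (hα : α ≤ 1)
    (hshort : ‖u - v‖ ^ 2 ≤ α * (‖u‖ ^ 2 + ‖v‖ ^ 2)) :
    (1 - α) * (‖u‖ * ‖v‖) ≤ ⟪u, v⟫ := by
  rw [norm_sub_sq_real] at hshort
  have amgm : 2 * (‖u‖ * ‖v‖) ≤ ‖u‖ ^ 2 + ‖v‖ ^ 2 := by
    rw [← mul_assoc]; exact two_mul_le_add_sq _ _
  linarith [mul_le_mul_of_nonneg_left amgm (sub_nonneg.mpr hα)]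

end NormalizedDistance

theorem stmt_1_general {H : Type*} [NormedAddCommGroup H] [InnerProductSpace ℝ H]
    (u v : H) (hu : u ≠ 0) (hv : v ≠ 0) (α : ℝ) (hα1 : α < 1)
    (hshort : ‖u - v‖ ^ 2 ≤ α * (‖u‖ ^ 2 + ‖v‖ ^ 2)) :
    ‖(‖u‖⁻¹ • u) - (‖v‖⁻¹ • v)‖ ^ 2 ≤ 2 * α := by
  have hprod : 0 < ‖u‖ * ‖v‖ := by positivity
  have hcos : 1 - α ≤ ⟪u, v⟫ / (‖u‖ * ‖v‖) :=
    (le_div_iff₀ hprod).mpr (mul_norm_mul_norm_le_inner_of_norm_sub_sq_le hα1.le hshort)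
  rw [norm_inv_smul_sub_inv_smul_sq hu hv]
  linarith

theorem stmt_1 {H : Type*} [NormedAddCommGroup H] [InnerProductSpace ℝ H]
    (u v : H) (hu : u ≠ 0) (hv : v ≠ 0) (α : ℝ) (hα0 : 0 ≤ α) (hα1 : α < 1)
    (hinner : 0 ≤ inner (𝕜 := ℝ) u v)
    (hshort : ‖u - v‖ ^ 2 ≤ α * (‖u‖ ^ 2 + ‖v‖ ^ 2)) :
    ‖(‖u‖⁻¹ • u) - (‖v‖⁻¹ • v)‖ ^ 2 ≤ 2 * α :=
  stmt_1_general u v hu hv α hα1 hshort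
end

section
/- Let k ≥ 2, and let I = [x, x+Δ) ⊆ (0, 1] be an interval with x > 0. Pick r at random from (1, 2) with density (r ln 2)^{-1} (i.e., log₂ r is uniform on (0,1)). If Δ ≤ x, then the probability that the set {r·2^{-t} : t ∈ ℕ} intersects the interval [x, x+Δ) is at most ln((x+Δ)/x)/ln 2 ≤ Δ/(x ln 2). -/
open MeasureTheory

private lemma key_int (c d : ℝ) (hc : 0 < c) (hcd : c ≤ d) :
    ∫⁻ r in Set.Ico c d, ENNReal.ofReal (1 / (r * Real.log 2)) ∂volume
      = ENNReal.ofReal ((Real.log d - Real.log c) / Real.log 2) := by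
  have hlog2 : 0 < Real.log 2 := Real.log_pos (by norm_num)
  have hd : 0 < d := lt_of_lt_of_le hc hcd
  have hcont : ContinuousOn (fun r : ℝ => 1 / (r * Real.log 2)) (Set.Icc c d) := by
    apply ContinuousOn.div continuousOn_const (continuousOn_id.mul continuousOn_const)
    intro r hr
    have : 0 < r := lt_of_lt_of_le hc hr.1
    exact mul_ne_zero this.ne' hlog2.ne'
  have hint : IntegrableOn (fun r : ℝ => 1 / (r * Real.log 2)) (Set.Ico c d) volume :=
    (hcont.integrableOn_Icc).mono_set Set.Ico_subset_Icc_self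
  have hpos : 0 ≤ᶠ[ae (volume.restrict (Set.Ico c d))] fun r : ℝ => 1 / (r * Real.log 2) := by
    filter_upwards [ae_restrict_mem measurableSet_Ico] with r hr
    have : 0 < r := lt_of_lt_of_le hc hr.1
    positivity
  rw [← MeasureTheory.ofReal_integral_eq_lintegral_ofReal hint hpos]
  congr 1
  rw [MeasureTheory.integral_Ico_eq_integral_Ioo, ← MeasureTheory.integral_Ioc_eq_integral_Ioo,
    ← intervalIntegral.integral_of_le hcd]
  have hrw : ∀ r : ℝ, 1 / (r * Real.log 2) = (Real.log 2)⁻¹ * r⁻¹ := by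
    intro r; rw [one_div, mul_inv, mul_comm]
  simp_rw [hrw]
  rw [intervalIntegral.integral_const_mul, integral_inv_of_pos hc hd,
    Real.log_div (ne_of_gt hd) (ne_of_gt hc)]
  ring

theorem stmt_4 (k : ℕ) (hk : 2 ≤ k) (x Δ : ℝ) (hx : 0 < x) (hΔ : 0 < Δ)
    (hΔx : Δ ≤ x) (hsub : x + Δ ≤ 1) :
    ((volume.restrict (Set.Ioo (1:ℝ) 2)).withDensity
        (fun r => ENNReal.ofReal (1 / (r * Real.log 2))))
      {r : ℝ | ∃ t : ℕ, r * 2 ^ (-(t:ℤ)) ∈ Set.Ico x (x + Δ)}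
      ≤ ENNReal.ofReal (Real.log ((x + Δ) / x) / Real.log 2)
    ∧ Real.log ((x + Δ) / x) / Real.log 2 ≤ Δ / (x * Real.log 2) := by
  have hlog2 : 0 < Real.log 2 := Real.log_pos (by norm_num)
  have hxΔ : 0 < x + Δ := by linarith
  constructor
  · -- rewrite the set as a union of intervals
    have hset : {r : ℝ | ∃ t : ℕ, r * 2 ^ (-(t:ℤ)) ∈ Set.Ico x (x + Δ)}
        = ⋃ t : ℕ, Set.Ico (x * 2 ^ t) ((x + Δ) * 2 ^ t) := by
      ext r
      simp only [Set.mem_setOf_eq, Set.mem_iUnion, Set.mem_Ico]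
      have hid : ∀ (s : ℝ) (t : ℕ), s * 2 ^ (-(t:ℤ)) * 2 ^ t = s := by
        intro s t
        rw [mul_assoc, ← zpow_natCast (2:ℝ) t, ← zpow_add₀ (by norm_num : (2:ℝ) ≠ 0)]
        simp
      constructor
      · rintro ⟨t, h1, h2⟩
        refine ⟨t, ?_, ?_⟩
        · have := mul_le_mul_of_nonneg_right h1 (by positivity : (0:ℝ) ≤ 2 ^ t)
          rwa [hid] at this
        · have := mul_lt_mul_of_pos_right h2 (by positivity : (0:ℝ) < 2 ^ t)
          rwa [hid] at this
      · rintro ⟨t, h1, h2⟩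
        refine ⟨t, ?_, ?_⟩
        · have := mul_le_mul_of_nonneg_right h1 (by positivity : (0:ℝ) ≤ (2:ℝ) ^ (-(t:ℤ)))
          rwa [mul_assoc, ← zpow_natCast (2:ℝ) t, ← zpow_add₀ (by norm_num : (2:ℝ) ≠ 0),
            add_neg_cancel, zpow_zero, mul_one] at this
        · have := mul_lt_mul_of_pos_right h2 (by positivity : (0:ℝ) < (2:ℝ) ^ (-(t:ℤ)))
          rwa [mul_assoc, ← zpow_natCast (2:ℝ) t, ← zpow_add₀ (by norm_num : (2:ℝ) ≠ 0),
            add_neg_cancel, zpow_zero, mul_one] at this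
    set S : Set ℝ := {r : ℝ | ∃ t : ℕ, r * 2 ^ (-(t:ℤ)) ∈ Set.Ico x (x + Δ)} with hS
    have hSmeas : MeasurableSet S := by
      rw [hset]; exact MeasurableSet.iUnion fun t => measurableSet_Ico
    have hex : ∃ t : ℕ, 1 < (x + Δ) * 2 ^ t := by
      obtain ⟨n, hn⟩ := pow_unbounded_of_one_lt ((x + Δ)⁻¹) (by norm_num : (1:ℝ) < 2)
      refine ⟨n, ?_⟩
      have := mul_lt_mul_of_pos_left hn hxΔ
      rwa [mul_inv_cancel₀ (ne_of_gt hxΔ)] at this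
    set t0 := Nat.find hex with ht0
    have hspec : 1 < (x + Δ) * 2 ^ t0 := Nat.find_spec hex
    set a := x * 2 ^ t0 with ha
    set b := (x + Δ) * 2 ^ t0 with hb
    have hp0 : (0:ℝ) < 2 ^ t0 := by positivity
    have ha0 : 0 < a := by positivity
    have hab : a < b := mul_lt_mul_of_pos_right (by linarith) hp0
    have hb1 : 1 < b := hspec
    have hb2 : b ≤ 2 := by
      rcases Nat.eq_zero_or_pos t0 with h0 | hposn
      · rw [hb, h0]; simp; linarith
      · have hmin : ¬ (1 < (x + Δ) * 2 ^ (t0 - 1)) := Nat.find_min hex (by omega)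
        push_neg at hmin
        have hp : (2:ℝ) ^ t0 = 2 ^ (t0 - 1) * 2 := by
          rw [← pow_succ]; congr 1; omega
        rw [hb, hp]
        calc (x + Δ) * (2 ^ (t0 - 1) * 2) = 2 * ((x + Δ) * 2 ^ (t0 - 1)) := by ring
          _ ≤ 2 := by linarith
    have hsub2 : S ∩ Set.Ioo (1:ℝ) 2 ⊆
        Set.Ico (max a 1) b ∪ Set.Ico (2 * a) 2 := by
      rintro r ⟨hrS, hr1, hr2⟩
      rw [hset] at hrS
      simp only [Set.mem_iUnion, Set.mem_Ico] at hrS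
      obtain ⟨t, htl, htr⟩ := hrS
      have htge : t0 ≤ t := Nat.find_le (lt_trans hr1 htr)
      have htle : t ≤ t0 + 1 := by
        by_contra hcon
        push_neg at hcon
        have he : (2:ℝ) ^ t = 2 ^ (t - t0) * 2 ^ t0 := by
          rw [← pow_add]; congr 1; omega
        have h4 : (4:ℝ) ≤ 2 ^ (t - t0) := by
          calc (4:ℝ) = 2 ^ 2 := by norm_num
            _ ≤ 2 ^ (t - t0) := pow_le_pow_right₀ (by norm_num) (by omega)
        have hkey : (2:ℝ) < x * 2 ^ t := by
          rw [he, ← mul_assoc]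
          have s1 : (x + Δ) / 2 * (4 * 2 ^ t0) ≤ x * 2 ^ (t - t0) * 2 ^ t0 := by
            have l1 : (x + Δ) / 2 * 4 ≤ x * 2 ^ (t - t0) := by
              calc (x + Δ) / 2 * 4 ≤ x * 4 := by linarith
                _ ≤ x * 2 ^ (t - t0) := by nlinarith
            calc (x + Δ) / 2 * (4 * 2 ^ t0) = ((x + Δ) / 2 * 4) * 2 ^ t0 := by ring
              _ ≤ x * 2 ^ (t - t0) * 2 ^ t0 := mul_le_mul_of_nonneg_right l1 hp0.le
          have s2 : (2:ℝ) < (x + Δ) / 2 * (4 * 2 ^ t0) := by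
            have hq : (x + Δ) / 2 * (4 * 2 ^ t0) = 2 * ((x + Δ) * 2 ^ t0) := by ring
            rw [hq]; linarith
          linarith
        linarith
      have hcase : t = t0 ∨ t = t0 + 1 := by omega
      rcases hcase with rfl | rfl
      · exact Or.inl ⟨max_le htl hr1.le, htr⟩
      · refine Or.inr ⟨?_, hr2⟩
        have h2a : 2 * a = x * 2 ^ (t0 + 1) := by rw [ha, pow_succ]; ring
        rw [h2a]; exact htl
    have hdiff : Real.log b - Real.log a = Real.log ((x + Δ) / x) := by
      rw [hb, ha, Real.log_mul (ne_of_gt hxΔ) (ne_of_gt hp0),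
        Real.log_mul (ne_of_gt hx) (ne_of_gt hp0),
        Real.log_div (ne_of_gt hxΔ) (ne_of_gt hx)]
      ring
    calc ((volume.restrict (Set.Ioo (1:ℝ) 2)).withDensity
        (fun r => ENNReal.ofReal (1 / (r * Real.log 2)))) S
        = ∫⁻ r in S, ENNReal.ofReal (1 / (r * Real.log 2))
            ∂(volume.restrict (Set.Ioo (1:ℝ) 2)) := withDensity_apply _ hSmeas
      _ = ∫⁻ r in S ∩ Set.Ioo (1:ℝ) 2, ENNReal.ofReal (1 / (r * Real.log 2)) ∂volume := by
          rw [Measure.restrict_restrict hSmeas]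
      _ ≤ ∫⁻ r in Set.Ico (max a 1) b ∪ Set.Ico (2 * a) 2,
            ENNReal.ofReal (1 / (r * Real.log 2)) ∂volume := lintegral_mono_set hsub2
      _ ≤ (∫⁻ r in Set.Ico (max a 1) b, ENNReal.ofReal (1 / (r * Real.log 2)) ∂volume)
            + ∫⁻ r in Set.Ico (2 * a) 2, ENNReal.ofReal (1 / (r * Real.log 2)) ∂volume :=
          lintegral_union_le _ _ _
      _ ≤ ENNReal.ofReal (Real.log ((x + Δ) / x) / Real.log 2) := by
          rcases le_or_gt 1 a with h1a | h1a
          · rw [max_eq_left h1a, Set.Ico_eq_empty (show ¬ 2 * a < 2 by push_neg; linarith)]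
            simp only [Measure.restrict_empty, lintegral_zero_measure, add_zero]
            rw [key_int a b ha0 hab.le]
            exact ENNReal.ofReal_le_ofReal (le_of_eq (by rw [hdiff]))
          · rw [max_eq_right h1a.le, key_int 1 b one_pos hb1.le,
              key_int (2 * a) 2 (by linarith) (by linarith)]
            have hlogb : 0 ≤ Real.log b := Real.log_nonneg hb1.le
            have hlog2a : Real.log (2 * a) ≤ Real.log 2 :=
              Real.log_le_log (by linarith) (by linarith)
            rw [← ENNReal.ofReal_add
              (div_nonneg (by simp [hlogb]) hlog2.le)
              (div_nonneg (by linarith) hlog2.le)]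
            apply ENNReal.ofReal_le_ofReal
            have heq : (Real.log b - Real.log 1) / Real.log 2
                + (Real.log 2 - Real.log (2 * a)) / Real.log 2
                = (Real.log b - Real.log a) / Real.log 2 := by
              rw [Real.log_one, Real.log_mul (by norm_num) (ne_of_gt ha0)]
              ring
            rw [heq, hdiff]
  · have h1 : Real.log ((x + Δ) / x) ≤ Δ / x := by
      have h2 := Real.log_le_sub_one_of_pos (show 0 < (x + Δ) / x by positivity)
      have h3 : (x + Δ) / x - 1 = Δ / x := by field_simp; ring
      linarith
    have h4 : Δ / (x * Real.log 2) = (Δ / x) / Real.log 2 := by rw [div_div]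
    rw [h4]
    gcongr
end
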